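/- In the setting of the forward-chaining chain S = W_0 ⊊ W_1 ⊊ ⋯ ⊊ W_t ⊇ S' associated with a round-minimal L-optimal CNF Φ for price_L(S,S'), with B_i a smallest member of 𝓑 contained in W_i for i = 0,…,t−1 and B_t := S', we have B_i ⊄ W_{i−1} (i.e., B_i is not a subset of W_{i−1}) for every i = 1,…,t. -/

import Mathlib

open Finset

variable {V : Type*} [Fintype V] [DecidableEq V]

/-- A pure Horn CNF is a finite set of clauses `(B, v)`: body `B`, head `v`,
with `B` nonempty and `v ∉ B`. -/
def PureHorn (Φ : Finset (Finset V × V)) : Prop :=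
  ∀ c ∈ Φ, c.1.Nonempty ∧ c.2 ∉ c.1

/-- A set `W` is closed under the clauses of `Φ`. -/
def HornClosed (Φ : Finset (Finset V × V)) (W : Set V) : Prop :=
  ∀ c ∈ Φ, ↑c.1 ⊆ W → c.2 ∈ W

/-- Forward-chaining closure `F_Φ(Z)`: the smallest set containing `Z`
that is closed under the clauses of `Φ`. -/
def hornClosure (Φ : Finset (Finset V × V)) (Z : Set V) : Set V :=
  ⋂₀ {W : Set V | Z ⊆ W ∧ HornClosed Φ W}

/-- `Ψ_𝓑 = ⋀_{B ∈ 𝓑} B → (V \ B)`. -/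
def keyCNF (𝓑 : Finset (Finset V)) : Finset (Finset V × V) :=
  𝓑.biUnion fun B => (Finset.univ \ B).image fun v => (B, v)

/-- `Φ` represents the key Horn function `h_𝓑`, i.e. `Φ` is a pure Horn CNF
equivalent to `Ψ_𝓑`. -/
def Represents (𝓑 : Finset (Finset V)) (Φ : Finset (Finset V × V)) : Prop :=
  PureHorn Φ ∧ ∀ Z : Finset V, hornClosure Φ ↑Z = hornClosure (keyCNF 𝓑) ↑Z

/-- (B) number of (distinct) bodies. -/
def sizeB (Φ : Finset (Finset V × V)) : ℕ := (Φ.image Prod.fst).card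
/-- (BA) body area `Σ_i |B_i|` over the distinct bodies. -/
def sizeBA (Φ : Finset (Finset V × V)) : ℕ := ∑ B ∈ Φ.image Prod.fst, B.card
/-- (C) number of clauses `Σ_i |H_i|`. -/
def sizeC (Φ : Finset (Finset V × V)) : ℕ := Φ.card
/-- (TA) total area `Σ_i (|B_i| + |H_i|)`. -/
def sizeTA (Φ : Finset (Finset V × V)) : ℕ := sizeBA Φ + sizeC Φ
/-- (BC) bodies plus clauses `Σ_i (|H_i| + 1)`. -/
def sizeBC (Φ : Finset (Finset V × V)) : ℕ := sizeB Φ + sizeC Φ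
/-- (L) number of literals `Σ_i (|B_i| + 1)·|H_i|`. -/
def sizeL (Φ : Finset (Finset V × V)) : ℕ := ∑ c ∈ Φ, (c.1.card + 1)

/-- `μ` is one of the six size measures. -/
def IsMeasure (μ : Finset (Finset V × V) → ℕ) : Prop :=
  μ = sizeB ∨ μ = sizeBA ∨ μ = sizeTA ∨ μ = sizeC ∨ μ = sizeBC ∨ μ = sizeL

/-- `OPT_μ(𝓑)`: minimum `μ`-size of a CNF representing `h_𝓑`. -/
noncomputable def OPT (μ : Finset (Finset V × V) → ℕ) (𝓑 : Finset (Finset V)) : ℕ :=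
  sInf {s : ℕ | ∃ Φ : Finset (Finset V × V), Represents 𝓑 Φ ∧ μ Φ = s}

/-- `price_μ(S,T)`: minimum `μ`-size of a pure Horn CNF with bodies in `𝓑`
whose forward chaining from `S` reaches all of `T`. -/
noncomputable def price (μ : Finset (Finset V × V) → ℕ) (𝓑 : Finset (Finset V))
    (S T : Finset V) : ℕ :=
  sInf {s : ℕ | ∃ Φ : Finset (Finset V × V),
    PureHorn Φ ∧ (∀ c ∈ Φ, c.1 ∈ 𝓑) ∧ ↑T ⊆ hornClosure Φ ↑S ∧ μ Φ = s}

/-- One round of forward chaining. -/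
def fcStep (Φ : Finset (Finset V × V)) (W : Finset V) : Finset V :=
  W ∪ (Φ.filter fun c => c.1 ⊆ W).image Prod.snd

/-- The forward-chaining chain `W_0 = S`, `W_{i+1} = fcStep Φ W_i`. -/
def fcChain (Φ : Finset (Finset V × V)) (S : Finset V) : ℕ → Finset V
  | 0 => S
  | i + 1 => fcStep Φ (fcChain Φ S i)

/-- The CNF `⋀_{i=0}^{t-1} Bs i → (Bs (i+1) \ (S ∪ ⋃_{j=1}^{i} Bs j))`. -/
def chainCNF (S : Finset V) (Bs : ℕ → Finset V) (t : ℕ) :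
    Finset (Finset V × V) :=
  (Finset.range t).biUnion fun i =>
    (Bs (i + 1) \ (S ∪ (Finset.Icc 1 i).biUnion Bs)).image fun v => (Bs i, v)

/-!
Suppose `B_i ⊆ W_{i-1}`. If `i = t`, then `S' ⊆ W_{t-1}`; discarding the clauses whose heads lie
outside `W_{t-1}` still derives `S'`, and since `W_{t-1} ≠ W_t` at least one clause is discarded, so
the literal count drops, contradicting L-optimality. If `i < t`, give every clause whose body lies
in `W_i` and whose head lies outside `W_{i-1}` the body `B_i` instead. As `B_i ⊆ W_{i-1}`, each of
them can already fire in round `i`, and minimality of `|B_i|` keeps the literal count from growing.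
From round `i` on the new chain runs one round ahead of the old one, so it stabilizes after
`t - 1` rounds, contradicting round-minimality.
-/

section HornClosure

variable {V : Type*} {Φ : Finset (Finset V × V)}

theorem subset_hornClosure (Φ : Finset (Finset V × V)) (Z : Set V) : Z ⊆ hornClosure Φ Z :=
  fun _ hv _ hW => hW.1 hv

theorem hornClosed_hornClosure (Φ : Finset (Finset V × V)) (Z : Set V) :
    HornClosed Φ (hornClosure Φ Z) :=
  fun c hc hsub _ hW => hW.2 c hc fun _ hx => hsub hx _ hW

theorem hornClosure_subset_of_hornClosed {Z W : Set V} (hZ : Z ⊆ W) (hW : HornClosed Φ W) :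
    hornClosure Φ Z ⊆ W :=
  Set.sInter_subset_of_mem ⟨hZ, hW⟩

theorem PureHorn.mono {Ψ : Finset (Finset V × V)} (h : PureHorn Φ) (hΨ : Ψ ⊆ Φ) :
    PureHorn Ψ :=
  fun c hc => h c (hΨ hc)

theorem price_le {μ : Finset (Finset V × V) → ℕ} {𝓑 : Finset (Finset V)} {S T : Finset V}
    (hPH : PureHorn Φ) (h𝓑 : ∀ c ∈ Φ, c.1 ∈ 𝓑)
    (hT : ↑T ⊆ hornClosure Φ ↑S) : price μ 𝓑 S T ≤ μ Φ :=
  Nat.sInf_le ⟨Φ, hPH, h𝓑, hT, rfl⟩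

theorem sizeL_strictMono : StrictMono (sizeL (V := V)) := fun Ψ Φ h => by
  obtain ⟨c, hc, hcΨ⟩ := exists_of_ssubset h
  exact sum_lt_sum_of_subset h.subset hc hcΨ c.1.card.succ_pos fun _ _ _ => Nat.zero_le _

end HornClosure

section ForwardChaining

variable {V : Type*} [DecidableEq V] {Φ : Finset (Finset V × V)} {S W : Finset V}

theorem mem_fcStep {v : V} : v ∈ fcStep Φ W ↔ v ∈ W ∨ ∃ c ∈ Φ, c.1 ⊆ W ∧ c.2 = v := by
  simp only [fcStep, mem_union, mem_image, mem_filter, and_assoc]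

theorem subset_fcStep : W ⊆ fcStep Φ W := subset_union_left

theorem head_mem_fcStep {B : Finset V} {v : V} (hc : (B, v) ∈ Φ) (h : B ⊆ W) :
    v ∈ fcStep Φ W :=
  mem_fcStep.2 (Or.inr ⟨_, hc, h, rfl⟩)

theorem fcChain_monotone (Φ : Finset (Finset V × V)) (S : Finset V) : Monotone (fcChain Φ S) :=
  monotone_nat_of_le_succ fun _ => subset_fcStep

theorem fcChain_subset_of_hornClosed {W : Set V} (hS : ↑S ⊆ W) (hW : HornClosed Φ W) (j : ℕ) :
    ↑(fcChain Φ S j) ⊆ W := by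
  induction j with
  | zero => exact hS
  | succ j ih =>
    intro v hv
    rcases mem_fcStep.1 hv with h | ⟨c, hc, hcs, rfl⟩
    · exact ih h
    · exact hW c hc ((coe_subset.2 hcs).trans ih)

theorem fcChain_subset_hornClosure (j : ℕ) : ↑(fcChain Φ S j) ⊆ hornClosure Φ ↑S :=
  fcChain_subset_of_hornClosed (subset_hornClosure Φ _) (hornClosed_hornClosure Φ _) j

theorem hornClosed_fcChain_of_eq_succ {t : ℕ} (h : fcChain Φ S t = fcChain Φ S (t + 1)) :
    HornClosed Φ ↑(fcChain Φ S t) := fun c hc hcs => by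
  rw [mem_coe, h]
  exact head_mem_fcStep hc (coe_subset.1 hcs)

variable {k : ℕ}

theorem fcChain_subset_fcChain_filter {j : ℕ} (hj : j ≤ k) :
    fcChain Φ S j ⊆ fcChain (Φ.filter fun c => c.2 ∈ fcChain Φ S k) S j := by
  induction j with
  | zero => exact Subset.rfl
  | succ j ih =>
    intro v hv
    rcases mem_fcStep.1 hv with h | ⟨c, hc, hcs, rfl⟩
    · exact subset_fcStep (ih (by omega) h)
    · exact head_mem_fcStep (mem_filter.2 ⟨hc, fcChain_monotone Φ S hj hv⟩)
        (hcs.trans (ih (by omega)))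

theorem price_sizeL_lt_of_subset_fcChain {𝓑 : Finset (Finset V)} {T : Finset V}
    (hPH : PureHorn Φ) (h𝓑 : ∀ c ∈ Φ, c.1 ∈ 𝓑) (hT : T ⊆ fcChain Φ S k)
    (hk : fcChain Φ S k ≠ fcChain Φ S (k + 1)) : price sizeL 𝓑 S T < sizeL Φ := by
  set Ψ := Φ.filter fun c => c.2 ∈ fcChain Φ S k
  have hΨ : Ψ ⊂ Φ := by
    obtain ⟨v, hv, hvk⟩ := not_subset.1 fun h => hk (subset_fcStep.antisymm h)
    rcases mem_fcStep.1 hv with h | ⟨c, hc, -, rfl⟩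
    · exact absurd h hvk
    · exact filter_ssubset.2 ⟨c, hc, hvk⟩
  have hTΨ : ↑T ⊆ hornClosure Ψ ↑S :=
    (coe_subset.2 (hT.trans (fcChain_subset_fcChain_filter le_rfl))).trans
      (fcChain_subset_hornClosure k)
  calc price sizeL 𝓑 S T ≤ sizeL Ψ :=
        price_le (hPH.mono hΨ.subset) (fun c hc => h𝓑 c (hΨ.subset hc)) hTΨ
    _ < sizeL Φ := sizeL_strictMono hΨ

end ForwardChaining

section ReplaceBody

variable {V : Type*} [DecidableEq V]

def replaceBody (Φ : Finset (Finset V × V)) (U X B : Finset V) : Finset (Finset V × V) :=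
  Φ.image fun c => if c.1 ⊆ U ∧ c.2 ∉ X then (B, c.2) else c

variable {Φ : Finset (Finset V × V)} {U X B : Finset V}

theorem mem_replaceBody {c : Finset V × V} (hc : c ∈ Φ) (hU : c.1 ⊆ U) (hX : c.2 ∉ X) :
    (B, c.2) ∈ replaceBody Φ U X B :=
  mem_image.2 ⟨c, hc, if_pos ⟨hU, hX⟩⟩

theorem mem_replaceBody_of_not {c : Finset V × V} (hc : c ∈ Φ) (h : ¬(c.1 ⊆ U ∧ c.2 ∉ X)) :
    c ∈ replaceBody Φ U X B :=
  mem_image.2 ⟨c, hc, if_neg h⟩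

theorem forall_mem_replaceBody {p : Finset V × V → Prop}
    (hkeep : ∀ c ∈ Φ, ¬(c.1 ⊆ U ∧ c.2 ∉ X) → p c)
    (hrepl : ∀ c ∈ Φ, c.1 ⊆ U → c.2 ∉ X → p (B, c.2)) : ∀ c ∈ replaceBody Φ U X B, p c := by
  simp only [replaceBody, forall_mem_image]
  intro c hc
  split_ifs with h
  · exact hrepl c hc h.1 h.2
  · exact hkeep c hc h

theorem PureHorn.replaceBody (h : PureHorn Φ) (hB : B.Nonempty) (hBX : B ⊆ X) :
    PureHorn (replaceBody Φ U X B) :=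
  forall_mem_replaceBody (fun c hc _ => h c hc) fun _ _ _ hX => ⟨hB, fun h => hX (hBX h)⟩

theorem body_mem_of_mem_replaceBody {𝓑 : Finset (Finset V)} (h𝓑 : ∀ c ∈ Φ, c.1 ∈ 𝓑)
    (hB : B ∈ 𝓑) : ∀ c ∈ replaceBody Φ U X B, c.1 ∈ 𝓑 :=
  forall_mem_replaceBody (fun c hc _ => h𝓑 c hc) fun _ _ _ _ => hB

theorem HornClosed.replaceBody {W : Set V} (hW : HornClosed Φ W) (hUW : ↑U ⊆ W) :
    HornClosed (replaceBody Φ U X B) W :=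
  forall_mem_replaceBody (fun c hc _ => hW c hc) fun c hc hU _ _ =>
    hW c hc ((coe_subset.2 hU).trans hUW)

theorem sizeL_replaceBody_le (h : ∀ c ∈ Φ, c.1 ⊆ U → B.card ≤ c.1.card) :
    sizeL (replaceBody Φ U X B) ≤ sizeL Φ := by
  refine (sum_image_le_of_nonneg fun _ _ => Nat.zero_le _).trans (sum_le_sum fun c hc => ?_)
  split_ifs with hc'
  · exact Nat.add_le_add_right (h c hc hc'.1) 1
  · exact le_rfl

variable {S : Finset V} {k : ℕ}

theorem fcChain_subset_fcChain_replaceBody (hB : B ⊆ fcChain Φ S k) (j : ℕ) :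
    fcChain Φ S j ⊆ fcChain (replaceBody Φ U (fcChain Φ S k) B) S j := by
  induction j with
  | zero => exact Subset.rfl
  | succ j ih =>
    intro v hv
    rcases mem_fcStep.1 hv with h | ⟨c, hc, hcs, rfl⟩
    · exact subset_fcStep (ih h)
    by_cases hrepl : c.1 ⊆ U ∧ c.2 ∉ fcChain Φ S k
    · have hkj : k ≤ j := by
        by_contra! hjk
        exact hrepl.2 (fcChain_monotone Φ S hjk hv)
      exact head_mem_fcStep (mem_replaceBody hc hrepl.1 hrepl.2)
        ((hB.trans (fcChain_monotone Φ S hkj)).trans ih)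
    · exact head_mem_fcStep (mem_replaceBody_of_not hc hrepl) (hcs.trans ih)

theorem hornClosure_subset_hornClosure_replaceBody (hB : B ⊆ fcChain Φ S k) :
    hornClosure Φ ↑S ⊆ hornClosure (replaceBody Φ U (fcChain Φ S k) B) ↑S := by
  refine hornClosure_subset_of_hornClosed (subset_hornClosure _ _) fun c hc hcs => ?_
  by_cases hrepl : c.1 ⊆ U ∧ c.2 ∉ fcChain Φ S k
  · refine hornClosed_hornClosure _ _ (B, c.2) (mem_replaceBody hc hrepl.1 hrepl.2) ?_
    exact (coe_subset.2 (hB.trans (fcChain_subset_fcChain_replaceBody hB k))).trans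
      (fcChain_subset_hornClosure k)
  · exact hornClosed_hornClosure _ _ _ (mem_replaceBody_of_not hc hrepl) hcs

theorem fcChain_succ_subset_fcChain_replaceBody (hB : B ⊆ fcChain Φ S k) {j : ℕ}
    (hj : k + 1 ≤ j) :
    fcChain Φ S (j + 1) ⊆
      fcChain (replaceBody Φ (fcChain Φ S (k + 1)) (fcChain Φ S k) B) S j := by
  set Φ' := replaceBody Φ (fcChain Φ S (k + 1)) (fcChain Φ S k) B
  have hBΦ' : ∀ j, k ≤ j → B ⊆ fcChain Φ' S j := fun j hj =>
    (hB.trans (fcChain_subset_fcChain_replaceBody hB k)).trans (fcChain_monotone Φ' S hj)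
  induction j, hj using Nat.le_induction with
  | base =>
    intro v hv
    rcases mem_fcStep.1 hv with h | ⟨c, hc, hcs, rfl⟩
    · exact fcChain_subset_fcChain_replaceBody hB _ h
    by_cases hck : c.2 ∈ fcChain Φ S (k + 1)
    · exact fcChain_subset_fcChain_replaceBody hB _ hck
    · exact head_mem_fcStep (mem_replaceBody hc hcs fun h => hck (subset_fcStep h))
        (hBΦ' k le_rfl)
  | succ j hj ih =>
    intro v hv
    rcases mem_fcStep.1 hv with h | ⟨c, hc, hcs, rfl⟩
    · exact subset_fcStep (ih h)
    by_cases hrepl : c.1 ⊆ fcChain Φ S (k + 1) ∧ c.2 ∉ fcChain Φ S k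
    · exact head_mem_fcStep (mem_replaceBody hc hrepl.1 hrepl.2) (hBΦ' j (by omega))
    · exact head_mem_fcStep (mem_replaceBody_of_not hc hrepl) (hcs.trans ih)

theorem fcChain_replaceBody_eq_succ (hB : B ⊆ fcChain Φ S k) {m : ℕ} (hm : k + 1 ≤ m)
    (hstab : fcChain Φ S (m + 1) = fcChain Φ S (m + 2)) :
    fcChain (replaceBody Φ (fcChain Φ S (k + 1)) (fcChain Φ S k) B) S m =
      fcChain (replaceBody Φ (fcChain Φ S (k + 1)) (fcChain Φ S k) B) S (m + 1) := by
  refine subset_fcStep.antisymm ?_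
  have hclosed := (hornClosed_fcChain_of_eq_succ hstab).replaceBody (X := fcChain Φ S k) (B := B)
    (coe_subset.2 (fcChain_monotone Φ S (by omega : k + 1 ≤ m + 1)))
  refine (coe_subset.1 (fcChain_subset_of_hornClosed ?_ hclosed (m + 1))).trans
    (fcChain_succ_subset_fcChain_replaceBody hB hm)
  exact coe_subset.2 (fcChain_monotone Φ S (Nat.zero_le _))

end ReplaceBody

theorem stmt10_general {V : Type*} [DecidableEq V]
    (𝓑 : Finset (Finset V))
    (hne : ∀ B ∈ 𝓑, B.Nonempty)
    (S S' : Finset V)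
    (Φ : Finset (Finset V × V)) (t : ℕ)
    (hPH : PureHorn Φ) (hbodies : ∀ c ∈ Φ, c.1 ∈ 𝓑)
    (hSreach : ↑S' ⊆ hornClosure Φ ↑S)
    (hopt : sizeL Φ = price sizeL 𝓑 S S')
    (hstab : fcChain Φ S t = fcChain Φ S (t + 1))
    (htleast : ∀ j < t, fcChain Φ S j ≠ fcChain Φ S (j + 1))
    (hround : ∀ (Φ' : Finset (Finset V × V)) (t' : ℕ), PureHorn Φ' →
      (∀ c ∈ Φ', c.1 ∈ 𝓑) → ↑S' ⊆ hornClosure Φ' ↑S →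
      sizeL Φ' = price sizeL 𝓑 S S' →
      fcChain Φ' S t' = fcChain Φ' S (t' + 1) → t ≤ t')
    (Bseq : ℕ → Finset V)
    (hBseq : ∀ i < t, Bseq i ∈ 𝓑 ∧ Bseq i ⊆ fcChain Φ S i ∧
      ∀ B' ∈ 𝓑, B' ⊆ fcChain Φ S i → (Bseq i).card ≤ B'.card)
    (hBt : Bseq t = S')
    : ∀ i : ℕ, 1 ≤ i → i ≤ t → ¬ Bseq i ⊆ fcChain Φ S (i - 1) := by
  rintro (_ | k) hk hkt hsub
  · omega
  rw [Nat.add_sub_cancel] at hsub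
  rcases hkt.eq_or_lt with rfl | hlt
  · exact (price_sizeL_lt_of_subset_fcChain hPH hbodies (hBt ▸ hsub)
      (htleast k k.lt_succ_self)).ne' hopt
  obtain ⟨hB𝓑, -, hBmin⟩ := hBseq (k + 1) hlt
  obtain ⟨m, rfl⟩ : ∃ m, t = m + 1 := ⟨t - 1, by omega⟩
  set Φ' := replaceBody Φ (fcChain Φ S (k + 1)) (fcChain Φ S k) (Bseq (k + 1))
  have hPH' : PureHorn Φ' := hPH.replaceBody (hne _ hB𝓑) hsub
  have hbodies' : ∀ c ∈ Φ', c.1 ∈ 𝓑 := body_mem_of_mem_replaceBody hbodies hB𝓑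
  have hreach : ↑S' ⊆ hornClosure Φ' ↑S :=
    hSreach.trans (hornClosure_subset_hornClosure_replaceBody hsub)
  have hopt' : sizeL Φ' = price sizeL 𝓑 S S' :=
    le_antisymm (hopt ▸ sizeL_replaceBody_le fun c hc hcU => hBmin c.1 (hbodies c hc) hcU)
      (price_le hPH' hbodies' hreach)
  have hround' := hround Φ' m hPH' hbodies' hreach hopt'
    (fcChain_replaceBody_eq_succ hsub (by omega) hstab)
  omega

/-- Proposition 1: in the forward-chaining chain of a round-minimal L-optimal
CNF `Φ` for `price_L(S,S')`, with `B_i` a smallest body inside `W_i` and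
`B_t := S'`, we have `B_i ⊄ W_{i-1}` for `i = 1,…,t`. -/
theorem stmt10 {V : Type*} [Fintype V] [DecidableEq V]
    (𝓑 : Finset (Finset V))
    (hne : ∀ B ∈ 𝓑, B.Nonempty) (hproper : ∀ B ∈ 𝓑, B ≠ Finset.univ)
    (hsperner : ∀ B ∈ 𝓑, ∀ B' ∈ 𝓑, B ⊆ B' → B = B')
    (hcover : ∀ v : V, ∃ B ∈ 𝓑, v ∈ B)
    (hinter : ∀ v : V, ∃ B ∈ 𝓑, v ∉ B)
    (S S' : Finset V) (hS : ∃ B ∈ 𝓑, B ⊆ S)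
    (Φ : Finset (Finset V × V)) (t : ℕ)
    (hPH : PureHorn Φ) (hbodies : ∀ c ∈ Φ, c.1 ∈ 𝓑)
    (hSreach : ↑S' ⊆ hornClosure Φ ↑S)
    (hopt : sizeL Φ = price sizeL 𝓑 S S')
    (hstab : fcChain Φ S t = fcChain Φ S (t + 1))
    (htleast : ∀ j < t, fcChain Φ S j ≠ fcChain Φ S (j + 1))
    (hround : ∀ (Φ' : Finset (Finset V × V)) (t' : ℕ), PureHorn Φ' →
      (∀ c ∈ Φ', c.1 ∈ 𝓑) → ↑S' ⊆ hornClosure Φ' ↑S →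
      sizeL Φ' = price sizeL 𝓑 S S' →
      fcChain Φ' S t' = fcChain Φ' S (t' + 1) → t ≤ t')
    (Bseq : ℕ → Finset V)
    (hBseq : ∀ i < t, Bseq i ∈ 𝓑 ∧ Bseq i ⊆ fcChain Φ S i ∧
      ∀ B' ∈ 𝓑, B' ⊆ fcChain Φ S i → (Bseq i).card ≤ B'.card)
    (hBt : Bseq t = S')
    : ∀ i : ℕ, 1 ≤ i → i ≤ t → ¬ Bseq i ⊆ fcChain Φ S (i - 1) :=
  stmt10_general 𝓑 hne S S' Φ t hPH hbodies hSreach hopt hstab htleast hround Bseq hBseq hBt
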